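/- arXiv:1902.10089 — 2 statements merged into one kernel-verified Lean document; each statement's English description precedes it below -/
import Mathlib

section
/- Let a and n be positive integers, m = 2*a*n, and delta in [0, a*n]. Assume the pointwise bound B(y; m, 1/2) >= (2*sqrt(pi)/(e^2*sqrt(a*n))) * exp(-2*(y - a*n)^2/(a*n)) for all integers y in [0,m]. Then the binomial tail satisfies sum_{y = ceil(a*n + delta)}^{m} B(y; m, 1/2) >= (sqrt(pi)/(e^2*sqrt(a))) * exp(-2*(delta + sqrt(n))^2/(a*n)). -/
/-!
The Gaussian lower bound `L exp (-2 (y - an)² / an)`, `L = 2√π / (e² √(an))`, decreases for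
`y ≥ an`. The `⌊√n⌋ > √n / 2` integers from `⌈an + δ⌉` on lie within `δ + √n` of the mean, so the
tail is at least `(√n / 2) L exp (-2 (δ + √n)² / an)`, which is the claimed bound. If this window
overshoots `m = 2an`, take `[⌈an + δ⌉, m]` instead, with every term at least its bound at `y = m`.
Then `δ + √n > an`, and either that window still has `√n / 2` points, or `δ + √n > an + √n / 2`,
so `(δ + √n)² / an ≥ an + √n` and the extra factor `exp (-2√n)` makes up for the missing points.
-/

open Real Finset

theorem card_mul_le_sum_Icc_of_gaussian_le {A L P : ℝ} {m c e : ℕ} {B : ℕ → ℝ} (hA : 0 < A)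
    (hL : 0 ≤ L) (hB : ∀ y ≤ m, L * exp (-2 * ((y : ℝ) - A) ^ 2 / A) ≤ B y)
    (hc : A ≤ c) (he : e ≤ m) (hP : (e : ℝ) - A ≤ P) :
    ((e + 1 - c : ℕ) : ℝ) * (L * exp (-2 * P ^ 2 / A)) ≤ ∑ y ∈ Icc c m, B y := by
  have hterm : ∀ y ∈ Icc c e, L * exp (-2 * P ^ 2 / A) ≤ B y := by
    intro y hy
    obtain ⟨hcy, hye⟩ := mem_Icc.mp hy
    have hy0 : 0 ≤ (y : ℝ) - A := by linarith [(Nat.cast_le (α := ℝ)).mpr hcy]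
    have hyP : (y : ℝ) - A ≤ P := by linarith [(Nat.cast_le (α := ℝ)).mpr hye]
    have hsq : ((y : ℝ) - A) ^ 2 ≤ P ^ 2 := pow_le_pow_left₀ hy0 hyP 2
    refine le_trans (mul_le_mul_of_nonneg_left ?_ hL) (hB y (hye.trans he))
    exact exp_le_exp.mpr (by rw [div_le_div_iff_of_pos_right hA]; linarith)
  have hB0 : ∀ y ∈ Icc c m, 0 ≤ B y := fun y hy =>
    (mul_nonneg hL (exp_pos _).le).trans (hB y (mem_Icc.mp hy).2)
  calc ((e + 1 - c : ℕ) : ℝ) * (L * exp (-2 * P ^ 2 / A))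
      = #(Icc c e) • (L * exp (-2 * P ^ 2 / A)) := by rw [Nat.card_Icc, nsmul_eq_mul]
    _ ≤ ∑ y ∈ Icc c e, B y := card_nsmul_le_sum _ _ _ hterm
    _ ≤ ∑ y ∈ Icc c m, B y :=
      sum_le_sum_of_subset_of_nonneg (Icc_subset_Icc_right he) fun y hy _ => hB0 y hy

theorem mul_exp_neg_two_sq_div_le {A δ r K : ℝ} (hA : 0 < A) (hr : 0 ≤ r) (hK1 : 1 ≤ K)
    (hK : A - δ ≤ K) (hAr : A ≤ δ + r) :
    r * exp (-2 * (δ + r) ^ 2 / A) ≤ 2 * K * exp (-2 * A ^ 2 / A) := by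
  have hsplit : exp (-2 * (δ + r) ^ 2 / A) ≤ exp (-4 * (δ + r - A)) * exp (-2 * A ^ 2 / A) := by
    rw [← exp_add, exp_le_exp, ← sub_nonneg]
    have : -4 * (δ + r - A) + -2 * A ^ 2 / A - -2 * (δ + r) ^ 2 / A = 2 * (δ + r - A) ^ 2 / A := by
      field_simp
      ring
    rw [this]
    positivity
  suffices r * exp (-4 * (δ + r - A)) ≤ 2 * K by
    calc r * exp (-2 * (δ + r) ^ 2 / A)
        ≤ r * (exp (-4 * (δ + r - A)) * exp (-2 * A ^ 2 / A)) := by gcongr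
      _ ≤ 2 * K * exp (-2 * A ^ 2 / A) := by rw [← mul_assoc]; gcongr
  rcases le_or_gt (r / 2) (A - δ) with hfar | hnear
  · have : exp (-4 * (δ + r - A)) ≤ 1 := exp_le_one_iff.mpr (by linarith)
    nlinarith
  · have hexp : exp (-4 * (δ + r - A)) ≤ exp (-2 * r) := exp_le_exp.mpr (by linarith)
    have hr_le : r * exp (-2 * r) ≤ 1 := by
      rw [mul_comm, ← le_div_iff₀' (exp_pos _), one_div, ← exp_neg, neg_mul, neg_neg]
      linarith [add_one_le_exp (2 * r)]
    nlinarith [exp_pos (-4 * (δ + r - A))]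

theorem exists_window_card_mul_exp_ge {A δ r : ℝ} {m : ℕ} (hA : 0 < A) (hδ0 : 0 ≤ δ) (hδ : δ ≤ A)
    (hr : 1 ≤ r) (hm : (m : ℝ) = 2 * A) :
    ∃ e ≤ m, ∃ P, (e : ℝ) - A ≤ P ∧
      r * exp (-2 * (δ + r) ^ 2 / A) ≤ 2 * ((e + 1 - ⌈A + δ⌉₊ : ℕ) : ℝ) * exp (-2 * P ^ 2 / A) := by
  set c := ⌈A + δ⌉₊ with hc_def
  set s := ⌊r⌋₊
  have hcA : A + δ ≤ c := Nat.le_ceil _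
  have hc : (c : ℝ) < A + δ + 1 := Nat.ceil_lt_add_one (by positivity)
  have hcm : c ≤ m := by rw [hc_def, Nat.ceil_le, hm]; linarith
  have hcmR : (c : ℝ) ≤ m := by exact_mod_cast hcm
  have hs1 : 1 ≤ s := Nat.le_floor (by exact_mod_cast hr)
  have hs : r / 2 < s := Nat.div_two_lt_floor hr
  have hsr : (s : ℝ) ≤ r := Nat.floor_le (by positivity)
  rcases le_or_gt (c + s - 1) m with hfit | hover
  · refine ⟨c + s - 1, hfit, δ + r, ?_, ?_⟩
    · rw [Nat.cast_sub (by omega)]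
      push_cast
      linarith
    · rw [show c + s - 1 + 1 - c = s by omega]
      gcongr
      linarith
  · have hcs : (m : ℝ) + 2 ≤ c + s := by exact_mod_cast (by omega : m + 2 ≤ c + s)
    refine ⟨m, le_rfl, A, by linarith, mul_exp_neg_two_sq_div_le hA (by positivity) ?_ ?_
      (by linarith)⟩
    all_goals push_cast [hcm.trans (Nat.le_succ m)]; linarith

/-- Lower bound on the Binomial(m, 1/2) upper tail, where `m = 2 a n`. -/
theorem stmt_10 (a n : ℕ) (ha : 0 < a) (hn : 0 < n) (δ : ℝ)
    (hδ0 : 0 ≤ δ) (hδ : δ ≤ (a : ℝ) * n) :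
    let m := 2 * a * n
    let B : ℕ → ℝ := fun y => (m.choose y : ℝ) * (1 / 2) ^ m
    (∀ y : ℕ, y ≤ m →
        B y ≥ (2 * Real.sqrt Real.pi / (Real.exp 2 * Real.sqrt ((a : ℝ) * n)))
          * Real.exp (-2 * ((y : ℝ) - a * n) ^ 2 / ((a : ℝ) * n))) →
    ∑ y ∈ Finset.Icc ⌈(a : ℝ) * n + δ⌉₊ m, B y
      ≥ (Real.sqrt Real.pi / (Real.exp 2 * Real.sqrt a))
        * Real.exp (-2 * (δ + Real.sqrt n) ^ 2 / ((a : ℝ) * n)) := by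
  intro m B hB
  set A : ℝ := (a : ℝ) * n with hA_def
  set C : ℝ := √π / (exp 2 * √a) with hC_def
  have hA : 0 < A := by positivity
  have hL : 2 * √π / (exp 2 * √A) = 2 * C / √n := by
    have : 0 < √(a : ℝ) := sqrt_pos.mpr (by exact_mod_cast ha)
    rw [hA_def, hC_def, sqrt_mul (Nat.cast_nonneg a)]
    field_simp
  simp only [hL] at hB
  have hm : (m : ℝ) = 2 * A := by simp only [m]; push_cast; ring
  obtain ⟨e, he, P, hP, hwin⟩ := exists_window_card_mul_exp_ge hA hδ0 hδ
    (one_le_sqrt.mpr (by exact_mod_cast hn : (1 : ℝ) ≤ n)) hm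
  have hcA : A ≤ ⌈A + δ⌉₊ := (Nat.le_ceil _).trans' (by linarith)
  have hsum := card_mul_le_sum_Icc_of_gaussian_le hA (by positivity) hB hcA he hP
  rw [ge_iff_le]
  calc C * exp (-2 * (δ + √n) ^ 2 / A) = C / √n * (√n * exp (-2 * (δ + √n) ^ 2 / A)) := by
        have : 0 < √(n : ℝ) := sqrt_pos.mpr (by exact_mod_cast hn)
        field_simp
    _ ≤ C / √n * (2 * ((e + 1 - ⌈A + δ⌉₊ : ℕ) : ℝ) * exp (-2 * P ^ 2 / A)) := by gcongr
    _ = ((e + 1 - ⌈A + δ⌉₊ : ℕ) : ℝ) * (2 * C / √n * exp (-2 * P ^ 2 / A)) := by ring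
    _ ≤ _ := hsum
end

section
/- Let X be a random variable with values in [0, n], mean Xbar, satisfying the sub-Gaussian tail bound P(X <= Xbar - i*sqrt(n)) <= exp(-2*i^2) for every integer i >= 0. Let f be a non-negative decreasing function on [0, n], and let i0 be the smallest nonnegative integer such that (i0 + 1)*sqrt(n) >= Xbar. Then E[f(X)] <= sum_{i=0}^{i0 - 1} exp(-2*i^2) * f(Xbar - (i+1)*sqrt(n)) + exp(-2*i0^2) * f(0). -/
/-!
Cut `Ω` into the layers `E i \ E (i + 1)` (`i < i0`) and `E i0`, where `E 0 = Ω` and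
`E i = {X ≤ Xbar - i √n}` for `i ≥ 1`. On the `i`-th layer `X > Xbar - (i + 1) √n`, so
`f (X) ≤ f (Xbar - (i + 1) √n)` because `f` is decreasing, and the layer has probability at most
`P (E i) ≤ exp (-2 i²)`; on `E i0` one only uses `f (X) ≤ f 0`.
-/

open MeasureTheory ProbabilityTheory

namespace MeasureTheory

variable {Ω : Type*} [MeasurableSpace Ω] {μ : Measure Ω} [IsFiniteMeasure μ] {g : Ω → ℝ}

theorem setIntegral_le_measureReal_mul {s : Set Ω} {c : ℝ} (hs : MeasurableSet s)
    (hg : IntegrableOn g s μ) (hgc : ∀ ω ∈ s, g ω ≤ c) :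
    ∫ ω in s, g ω ∂μ ≤ μ.real s * c :=
  (setIntegral_mono_on hg integrableOn_const hs hgc).trans_eq (setIntegral_const c)

theorem setIntegral_le_measureReal_mul_add_setIntegral {s t : Set Ω} {c : ℝ}
    (hs : MeasurableSet s) (ht : MeasurableSet t) (hts : t ⊆ s) (hg : IntegrableOn g s μ)
    (hc : 0 ≤ c) (hgc : ∀ ω ∈ s \ t, g ω ≤ c) :
    ∫ ω in s, g ω ∂μ ≤ μ.real s * c + ∫ ω in t, g ω ∂μ := by
  have hdiff : ∫ ω in s \ t, g ω ∂μ ≤ μ.real s * c :=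
    (setIntegral_le_measureReal_mul (hs.diff ht) (hg.mono_set Set.sdiff_subset) hgc).trans
      (mul_le_mul_of_nonneg_right (measureReal_mono Set.sdiff_subset) hc)
  rw [setIntegral_sdiff ht hg hts] at hdiff
  linarith

theorem setIntegral_le_sum_measureReal_mul_add_setIntegral {E : ℕ → Set Ω} {c : ℕ → ℝ}
    (hE : ∀ i, MeasurableSet (E i)) (hanti : Antitone E) (hg : Integrable g μ) (m : ℕ)
    (hc : ∀ i < m, 0 ≤ c i) (hgc : ∀ i < m, ∀ ω ∈ E i \ E (i + 1), g ω ≤ c i) :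
    ∫ ω in E 0, g ω ∂μ ≤ ∑ i ∈ Finset.range m, μ.real (E i) * c i + ∫ ω in E m, g ω ∂μ := by
  induction m with
  | zero => simp
  | succ m ih =>
    have hstep := setIntegral_le_measureReal_mul_add_setIntegral (hE m) (hE (m + 1))
      (hanti m.le_succ) hg.integrableOn (hc m m.lt_succ_self) (hgc m m.lt_succ_self)
    have := ih (fun i hi => hc i (by omega)) (fun i hi => hgc i (by omega))
    rw [Finset.sum_range_succ]
    linarith

theorem integral_le_sum_mul_add_mul {E : ℕ → Set Ω} {c p : ℕ → ℝ} {C : ℝ}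
    (hE : ∀ i, MeasurableSet (E i)) (hE0 : E 0 = Set.univ) (hanti : Antitone E) (hg : Integrable g μ) (m : ℕ)
    (hp : ∀ i ≤ m, μ.real (E i) ≤ p i) (hc : ∀ i < m, 0 ≤ c i)
    (hgc : ∀ i < m, ∀ ω ∈ E i \ E (i + 1), g ω ≤ c i) (hC : 0 ≤ C) (hgC : ∀ ω ∈ E m, g ω ≤ C) :
    ∫ ω, g ω ∂μ ≤ ∑ i ∈ Finset.range m, p i * c i + p m * C := by
  rw [← setIntegral_univ, ← hE0]
  calc ∫ ω in E 0, g ω ∂μ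
      ≤ ∑ i ∈ Finset.range m, μ.real (E i) * c i + μ.real (E m) * C :=
        (setIntegral_le_sum_measureReal_mul_add_setIntegral hE hanti hg m hc hgc).trans
          (add_le_add_right (setIntegral_le_measureReal_mul (hE m) hg.integrableOn hgC) _)
    _ ≤ ∑ i ∈ Finset.range m, p i * c i + p m * C := by
        gcongr with i hi
        · exact hc i (Finset.mem_range.1 hi)
        · exact hp i (Finset.mem_range.1 hi).le
        · exact hp m le_rfl

end MeasureTheory

theorem stmt_11_general {Ω : Type*} [MeasureSpace Ω] [IsProbabilityMeasure (ℙ : Measure Ω)]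
    (n : ℕ) (X : Ω → ℝ) (hXm : Measurable X)
    (hXrange : ∀ ω, X ω ∈ Set.Icc (0 : ℝ) n)
    (Xbar : ℝ) (hXbar : ∫ ω, X ω ∂(ℙ : Measure Ω) = Xbar)
    (htail : ∀ i : ℕ, ((ℙ : Measure Ω) {ω | X ω ≤ Xbar - i * Real.sqrt n}).toReal ≤ Real.exp (-2 * (i : ℝ) ^ 2))
    (f : ℝ → ℝ) (hfm : Measurable f)
    (hf0 : ∀ x ∈ Set.Icc (0 : ℝ) n, 0 ≤ f x)
    (hfdec : AntitoneOn f (Set.Icc (0 : ℝ) n))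
    (i0 : ℕ)
    (hi0min : ∀ j : ℕ, j < i0 → ¬ (((j : ℝ) + 1) * Real.sqrt n ≥ Xbar)) :
    ∫ ω, f (X ω) ∂(ℙ : Measure Ω)
      ≤ ∑ i ∈ Finset.range i0,
          Real.exp (-2 * (i : ℝ) ^ 2) * f (Xbar - ((i : ℝ) + 1) * Real.sqrt n)
        + Real.exp (-2 * (i0 : ℝ) ^ 2) * f 0 := by
  have hmem0 : (0 : ℝ) ∈ Set.Icc (0 : ℝ) n := ⟨le_rfl, n.cast_nonneg⟩
  have hfX_le : ∀ ω, f (X ω) ≤ f 0 := fun ω => hfdec hmem0 (hXrange ω) (hXrange ω).1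
  have hfX : Integrable (fun ω => f (X ω)) :=
    .of_bound (hfm.comp hXm).aestronglyMeasurable (f 0)
      (.of_forall fun ω => (Real.norm_of_nonneg (hf0 _ (hXrange ω))).trans_le (hfX_le ω))
  have hXbar_le : Xbar ≤ n := hXbar ▸ (integral_mono (.of_mem_Icc 0 n hXm.aemeasurable
    (.of_forall hXrange)) (integrable_const _) fun ω => (hXrange ω).2).trans_eq (by simp)
  have hlevel : ∀ i < i0, Xbar - ((i : ℝ) + 1) * Real.sqrt n ∈ Set.Icc (0 : ℝ) n := by
    intro i hi
    have : 0 ≤ ((i : ℝ) + 1) * Real.sqrt n := by positivity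
    constructor <;> linarith [not_le.1 (hi0min i hi)]
  -- `i = 0 ∨` makes `E 0` the whole space, so that the top layer `{X > Xbar - √n}` is `E 0 \ E 1`.
  set E : ℕ → Set Ω := fun i => {ω | i = 0 ∨ X ω ≤ Xbar - i * Real.sqrt n}
  have hE : ∀ i, MeasurableSet (E i) := fun i =>
    (MeasurableSet.const (i = 0)).union (measurableSet_le hXm measurable_const)
  have hanti : Antitone E := antitone_nat_of_succ_le fun i ω hω => by
    refine Or.inr (hω.resolve_left i.succ_ne_zero |>.trans ?_)
    push_cast; nlinarith [Real.sqrt_nonneg n]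
  have hp : ∀ i ≤ i0, (ℙ : Measure Ω).real (E i) ≤ Real.exp (-2 * (i : ℝ) ^ 2) := by
    rintro (_ | i) -
    · simp
    · simpa [E, measureReal_def] using htail (i + 1)
  have hlayer : ∀ i < i0, ∀ ω ∈ E i \ E (i + 1),
      f (X ω) ≤ f (Xbar - ((i : ℝ) + 1) * Real.sqrt n) := by
    intro i hi ω hω
    have : Xbar - ((i : ℝ) + 1) * Real.sqrt n < X ω := by simpa [E] using hω.2
    exact hfdec (hlevel i hi) (hXrange ω) this.le
  exact integral_le_sum_mul_add_mul hE (by ext; simp [E]) hanti hfX i0 hp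
    (fun i hi => hf0 _ (hlevel i hi)) hlayer (hf0 0 hmem0) (fun ω _ => hfX_le ω)

/-- Layered expectation bound: if `X ∈ [0, n]` has mean `Xbar` and sub-Gaussian lower
tail `P(X ≤ Xbar - i √n) ≤ exp(-2 i²)`, and `f` is non-negative and decreasing on
`[0, n]`, with `i0` the smallest nonnegative integer such that `(i0+1) √n ≥ Xbar`, then
`E[f(X)] ≤ ∑_{i=0}^{i0-1} exp(-2 i²) f(Xbar - (i+1) √n) + exp(-2 i0²) f(0)`. -/
theorem stmt_11 {Ω : Type*} [MeasureSpace Ω] [IsProbabilityMeasure (ℙ : Measure Ω)]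
    (n : ℕ) (hn : 1 ≤ n) (X : Ω → ℝ) (hXm : Measurable X)
    (hXrange : ∀ ω, X ω ∈ Set.Icc (0 : ℝ) n)
    (Xbar : ℝ) (hXbar : ∫ ω, X ω ∂(ℙ : Measure Ω) = Xbar)
    (htail : ∀ i : ℕ, ((ℙ : Measure Ω) {ω | X ω ≤ Xbar - i * Real.sqrt n}).toReal ≤ Real.exp (-2 * (i : ℝ) ^ 2))
    (f : ℝ → ℝ) (hfm : Measurable f)
    (hf0 : ∀ x ∈ Set.Icc (0 : ℝ) n, 0 ≤ f x)
    (hfdec : AntitoneOn f (Set.Icc (0 : ℝ) n))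
    (i0 : ℕ) (hi0 : ((i0 : ℝ) + 1) * Real.sqrt n ≥ Xbar)
    (hi0min : ∀ j : ℕ, j < i0 → ¬ (((j : ℝ) + 1) * Real.sqrt n ≥ Xbar)) :
    ∫ ω, f (X ω) ∂(ℙ : Measure Ω)
      ≤ ∑ i ∈ Finset.range i0,
          Real.exp (-2 * (i : ℝ) ^ 2) * f (Xbar - ((i : ℝ) + 1) * Real.sqrt n)
        + Real.exp (-2 * (i0 : ℝ) ^ 2) * f 0 :=
  stmt_11_general n X hXm hXrange Xbar hXbar htail f hfm hf0 hfdec i0 hi0min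
end
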